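/- Let X be a Jónsson–Tarski algebra, I ⊆ {ℓ,r}* a dense left ideal, and f : I → X a function with f(aw) = a·f(w) for every a ∈ {ℓ, r} and w ∈ I. Then there exists a unique x ∈ X such that f(w) = w·x for every w ∈ I. -/
import Mathlib


/-- The two-letter alphabet `{ℓ, r}`. -/
inductive JTLetter : Type
  | l : JTLetter
  | r : JTLetter

/-- Action of a single letter on a Jónsson–Tarski algebra with operations `l`, `r`. -/
def JTact {X : Type*} (l r : X → X) : JTLetter → X → X
  | JTLetter.l => l
  | JTLetter.r => r

/-- Action of a word on a Jónsson–Tarski algebra: `ε · x = x`, `(a w) · x = a · (w · x)`. -/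
def JTwact {X : Type*} (l r : X → X) : List JTLetter → X → X
  | [], x => x
  | a :: w, x => JTact l r a (JTwact l r w x)

/-- A subset `I` of `{ℓ,r}*` (words as lists, multiplication is concatenation) is a
left ideal if `u ++ w ∈ I` whenever `w ∈ I`. -/
def IsLeftIdeal (I : Set (List JTLetter)) : Prop :=
  ∀ u w : List JTLetter, w ∈ I → u ++ w ∈ I

/-- A subset of `{ℓ,r}*` is closed if it is a left ideal, and contains `w` whenever it
contains `ℓ w` and `r w`. -/
def IsClosedSubset (C : Set (List JTLetter)) : Prop :=
  IsLeftIdeal C ∧ ∀ w : List JTLetter, (∀ a : JTLetter, (a :: w) ∈ C) → w ∈ C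

/-- A left ideal is dense if the only closed subset containing it is all of `{ℓ,r}*`. -/
def IsDenseIdeal (I : Set (List JTLetter)) : Prop :=
  ∀ C : Set (List JTLetter), IsClosedSubset C → I ⊆ C → C = Set.univ

theorem JTwact_append {X : Type*} (l r : X → X) (u v : List JTLetter) (x : X) :
    JTwact l r (u ++ v) x = JTwact l r u (JTwact l r v x) := by
  induction u with
  | nil => rfl
  | cons a u ih => simp [JTwact, ih]

/-- If `X` is a Jónsson–Tarski algebra, `I` a dense left ideal of `{ℓ,r}*`, and
`f : I → X` satisfies `f(aw) = a · f(w)`, then there is a unique `x ∈ X` with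
`f(w) = w · x` for all `w ∈ I`. -/
theorem stmt_10 {X : Type*} (l r : X → X) (m : X → X → X)
    (hm : ∀ x : X, m (l x) (r x) = x)
    (hl : ∀ x y : X, l (m x y) = x)
    (hr : ∀ x y : X, r (m x y) = y)
    (I : Set (List JTLetter)) (hIideal : IsLeftIdeal I) (hIdense : IsDenseIdeal I)
    (f : List JTLetter → X)
    (hf : ∀ (a : JTLetter), ∀ w ∈ I, f (a :: w) = JTact l r a (f w)) :
    ∃! x : X, ∀ w ∈ I, f w = JTwact l r w x := by
  classical
  -- f is equivariant on I for the whole word action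
  have hfI : ∀ u : List JTLetter, ∀ w ∈ I, f (u ++ w) = JTwact l r u (f w) := by
    intro u
    induction u with
    | nil => intro w hw; rfl
    | cons a u ih =>
      intro w hw
      have h1 : u ++ w ∈ I := hIideal u w hw
      have h2 := hf a (u ++ w) h1
      simp only [List.cons_append] at h2 ⊢
      rw [h2, ih w hw]; rfl
  set C : Set (List JTLetter) :=
    {w | ∃ x : X, ∀ v ∈ I, ∀ u : List JTLetter, v = u ++ w → f v = JTwact l r u x} with hC
  have hIC : I ⊆ C := by
    intro w hw
    exact ⟨f w, fun v hv u huv => by subst huv; exact hfI u w hw⟩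
  have hclosed : IsClosedSubset C := by
    constructor
    · intro u w hw
      obtain ⟨x, hx⟩ := hw
      refine ⟨JTwact l r u x, fun v hv u' huv => ?_⟩
      have : v = (u' ++ u) ++ w := by rw [huv, List.append_assoc]
      rw [hx v hv (u' ++ u) this, JTwact_append]
    · intro w hw
      obtain ⟨x1, hx1⟩ := hw JTLetter.l
      obtain ⟨x2, hx2⟩ := hw JTLetter.r
      refine ⟨m x1 x2, fun v hv u huv => ?_⟩
      rcases u.eq_nil_or_concat with rfl | ⟨u', a, rfl⟩
      · simp only [List.nil_append] at huv
        subst huv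
        have hv1 : f (JTLetter.l :: v) = x1 := by
          have := hx1 (JTLetter.l :: v) (hIideal [JTLetter.l] v hv) [] rfl
          simpa [JTwact] using this
        have hv2 : f (JTLetter.r :: v) = x2 := by
          have := hx2 (JTLetter.r :: v) (hIideal [JTLetter.r] v hv) [] rfl
          simpa [JTwact] using this
        have e1 := hf JTLetter.l v hv
        have e2 := hf JTLetter.r v hv
        rw [hv1] at e1; rw [hv2] at e2
        show f v = m x1 x2
        simp only [JTact] at e1 e2
        rw [e1, e2]
        exact (hm (f v)).symm
      · rw [List.concat_eq_append] at huv
        have hva : v = u' ++ (a :: w) := by rw [huv, List.append_assoc]; rfl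
        rw [List.concat_eq_append, JTwact_append]
        cases a with
        | l =>
          rw [hx1 v hv u' hva]
          simp [JTwact, JTact, hl]
        | r =>
          rw [hx2 v hv u' hva]
          simp [JTwact, JTact, hr]
  have huniv : C = Set.univ := hIdense C hclosed hIC
  have hnil : ([] : List JTLetter) ∈ C := huniv ▸ Set.mem_univ _
  obtain ⟨x, hx⟩ := hnil
  refine ⟨x, fun w hw => ?_, fun y hy => ?_⟩
  · have := hx w hw w (by simp)
    simpa using this
  · -- uniqueness via density
    set D : Set (List JTLetter) := {w | JTwact l r w y = JTwact l r w x} with hD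
    have hDclosed : IsClosedSubset D := by
      constructor
      · intro u w hw
        show JTwact l r (u ++ w) y = JTwact l r (u ++ w) x
        rw [JTwact_append, JTwact_append, hw]
      · intro w h
        have h1 := h JTLetter.l
        have h2 := h JTLetter.r
        simp only [hD, Set.mem_setOf_eq, JTwact, JTact] at h1 h2 ⊢
        calc JTwact l r w y = m (l (JTwact l r w y)) (r (JTwact l r w y)) := (hm _).symm
          _ = m (l (JTwact l r w x)) (r (JTwact l r w x)) := by rw [h1, h2]
          _ = JTwact l r w x := hm _
    have hID : I ⊆ D := by
      intro w hw
      show JTwact l r w y = JTwact l r w x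
      rw [← hy w hw]
      have := hx w hw w (by simp)
      simpa using this
    have : D = Set.univ := hIdense D hDclosed hID
    have : ([] : List JTLetter) ∈ D := this ▸ Set.mem_univ _
    exact this
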